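/- arXiv:2111.02535 — 3 statements merged into one kernel-verified Lean document; each statement's English description precedes it below -/
import Mathlib

section
/- For angles ψ, ψ' ∈ [0, π], there exists ι ∈ ℝ such that cos θ = cos ψ · cos ψ' − cos ι · sin ψ · sin ψ' if and only if |ψ − ψ'| ≤ θ ≤ π − |π − (ψ + ψ')|, for θ ∈ [0, π]. -/
/-!
Write `p = cos ψ cos ψ'` and `q = sin ψ sin ψ' ≥ 0`. As `ι` varies, `p - cos ι · q` sweeps out
exactly `[p - q, p + q]`, and these endpoints are `cos (π - |π - (ψ + ψ')|)` and `cos |ψ - ψ'|`.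
Both angles lie in `[0, π]`, where `cos` is strictly decreasing, so the condition on `cos θ`
becomes the stated bounds on `θ`.
-/

open Real

theorem exists_eq_sub_cos_mul_iff {p q x : ℝ} (hq : 0 ≤ q) :
    (∃ ι : ℝ, x = p - cos ι * q) ↔ x ∈ Set.Icc (p - q) (p + q) := by
  constructor
  · rintro ⟨ι, rfl⟩
    have hle := cos_le_one ι
    have hge := neg_one_le_cos ι
    constructor <;> nlinarith
  · rintro ⟨hlow, hupp⟩
    rcases hq.eq_or_lt with rfl | hq
    · exact ⟨0, by linarith⟩
    refine ⟨arccos ((p - x) / q), ?_⟩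
    have hc₁ : -1 ≤ (p - x) / q := by rw [le_div_iff₀ hq]; linarith
    have hc₂ : (p - x) / q ≤ 1 := by rw [div_le_one hq]; linarith
    rw [cos_arccos hc₁ hc₂, div_mul_cancel₀ _ hq.ne']
    ring

theorem cos_abs_sub (ψ ψ' : ℝ) : cos |ψ - ψ'| = cos ψ * cos ψ' + sin ψ * sin ψ' := by
  rw [cos_abs, cos_sub]

theorem cos_pi_sub_abs_pi_sub_add (ψ ψ' : ℝ) :
    cos (π - |π - (ψ + ψ')|) = cos ψ * cos ψ' - sin ψ * sin ψ' := by
  rw [cos_pi_sub, cos_abs, cos_pi_sub, cos_add, neg_neg]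

theorem abs_sub_mem_Icc {ψ ψ' : ℝ} (hψ : ψ ∈ Set.Icc 0 π) (hψ' : ψ' ∈ Set.Icc 0 π) :
    |ψ - ψ'| ∈ Set.Icc 0 π :=
  ⟨abs_nonneg _, abs_sub_le_iff.2 ⟨by linarith [hψ.2, hψ'.1], by linarith [hψ.1, hψ'.2]⟩⟩

theorem pi_sub_abs_pi_sub_add_mem_Icc {ψ ψ' : ℝ} (hψ : ψ ∈ Set.Icc 0 π)
    (hψ' : ψ' ∈ Set.Icc 0 π) : π - |π - (ψ + ψ')| ∈ Set.Icc 0 π := by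
  have hbound : |π - (ψ + ψ')| ≤ π :=
    abs_le.2 ⟨by linarith [hψ.2, hψ'.2], by linarith [hψ.1, hψ'.1]⟩
  exact ⟨sub_nonneg.2 hbound, sub_le_self _ (abs_nonneg _)⟩

theorem euler_middle_angle_achievable
    (ψ ψ' θ : ℝ) (hψ : ψ ∈ Set.Icc 0 π) (hψ' : ψ' ∈ Set.Icc 0 π)
    (hθ : θ ∈ Set.Icc 0 π) :
    (∃ ι : ℝ, Real.cos θ = Real.cos ψ * Real.cos ψ' - Real.cos ι * Real.sin ψ * Real.sin ψ') ↔
      (|ψ - ψ'| ≤ θ ∧ θ ≤ π - |π - (ψ + ψ')|) := by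
  have hq : 0 ≤ sin ψ * sin ψ' :=
    mul_nonneg (sin_nonneg_of_mem_Icc hψ) (sin_nonneg_of_mem_Icc hψ')
  simp only [mul_assoc]
  rw [exists_eq_sub_cos_mul_iff hq, ← cos_abs_sub, ← cos_pi_sub_abs_pi_sub_add, Set.mem_Icc,
    strictAntiOn_cos.le_iff_ge (pi_sub_abs_pi_sub_add_mem_Icc hψ hψ') hθ,
    strictAntiOn_cos.le_iff_ge hθ (abs_sub_mem_Icc hψ hψ'), and_comm]
end

section
/- Let a₁ ≥ a₂ ≥ 0 with a₁ + a₂ ≤ π/2, let b₁ ≥ b₂ ≥ 0 with b₁ + b₂ ≤ π/2, and let β ∈ [0, π/4]. Then the pair of conditions cos(2(a₁−a₂+β)) ≤ cos(2(b₁−b₂)) ≤ cos(2(a₁−a₂−β)) and cos(2(a₁+a₂+β)) ≤ cos(2(b₁+b₂)) ≤ cos(2(a₁+a₂−β)) holds if and only if the linear inequalities a₁+a₂−β ≤ b₁+b₂ ≤ π/2 − |π/2 − (a₁+a₂+β)| and |a₁−a₂−β| ≤ b₁−b₂ ≤ a₁−a₂+β hold. -/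
/-! On `[0, π]` the cosine is strictly decreasing, so every comparison of cosines there is a
comparison of arguments. The arguments `2 (a₁ ± a₂ - β)` are brought into `[0, π]` by the evenness
of cosine, and the arguments `2 (a₁ ± a₂ + β)`, which may exceed `π`, by the reflection
`cos x = cos (π - |π - x|)` folding `[0, 2π]` onto `[0, π]`. -/

open Real Set

namespace Real

theorem cos_pi_sub_abs_pi_sub (x : ℝ) : cos (π - |π - x|) = cos x := by
  rw [cos_pi_sub, cos_abs, cos_pi_sub, neg_neg]

theorem cos_le_cos_iff_le_pi_sub_abs {x y : ℝ} (hx : x ∈ Icc 0 (2 * π)) (hy : y ∈ Icc 0 π) :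
    cos x ≤ cos y ↔ y ≤ π - |π - x| := by
  have hfold : π - |π - x| ∈ Icc 0 π :=
    ⟨sub_nonneg.2 (abs_le.2 ⟨by linarith [hx.2], by linarith [hx.1]⟩),
      sub_le_self _ (abs_nonneg _)⟩
  rw [← cos_pi_sub_abs_pi_sub x, strictAntiOn_cos.le_iff_ge hfold hy]

theorem cos_le_cos_iff_abs_le {x y : ℝ} (hx : |x| ≤ π) (hy : y ∈ Icc 0 π) :
    cos y ≤ cos x ↔ |x| ≤ y := by
  rw [← cos_abs x, strictAntiOn_cos.le_iff_ge hy ⟨abs_nonneg x, hx⟩]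

theorem cos_two_mul_le_cos_two_mul_iff_le_pi_div_two_sub_abs {x y : ℝ} (hx : x ∈ Icc 0 π)
    (hy : y ∈ Icc 0 (π / 2)) :
    cos (2 * x) ≤ cos (2 * y) ↔ y ≤ π / 2 - |π / 2 - x| := by
  rw [cos_le_cos_iff_le_pi_sub_abs ⟨by linarith [hx.1], by linarith [hx.2]⟩
      ⟨by linarith [hy.1], by linarith [hy.2]⟩,
    show π - 2 * x = 2 * (π / 2 - x) by ring, abs_mul, abs_two]
  constructor <;> intro h <;> linarith

theorem cos_two_mul_le_cos_two_mul_iff_abs_le {x y : ℝ} (hx : |x| ≤ π / 2)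
    (hy : y ∈ Icc 0 (π / 2)) :
    cos (2 * y) ≤ cos (2 * x) ↔ |x| ≤ y := by
  rw [cos_le_cos_iff_abs_le (by rw [abs_mul, abs_two]; linarith)
      ⟨by linarith [hy.1], by linarith [hy.2]⟩, abs_mul, abs_two]
  constructor <;> intro h <;> linarith

end Real

theorem interference_trig_iff_linear
    (a₁ a₂ b₁ b₂ β : ℝ)
    (ha : a₁ ≥ a₂) (ha2 : a₂ ≥ 0) (hasum : a₁ + a₂ ≤ π / 2)
    (hb : b₁ ≥ b₂) (hb2 : b₂ ≥ 0) (hbsum : b₁ + b₂ ≤ π / 2)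
    (hβ : β ∈ Set.Icc 0 (π / 4)) :
    ((Real.cos (2 * (a₁ - a₂ + β)) ≤ Real.cos (2 * (b₁ - b₂)) ∧
        Real.cos (2 * (b₁ - b₂)) ≤ Real.cos (2 * (a₁ - a₂ - β))) ∧
      (Real.cos (2 * (a₁ + a₂ + β)) ≤ Real.cos (2 * (b₁ + b₂)) ∧
        Real.cos (2 * (b₁ + b₂)) ≤ Real.cos (2 * (a₁ + a₂ - β)))) ↔
    ((a₁ + a₂ - β ≤ b₁ + b₂ ∧ b₁ + b₂ ≤ π / 2 - |π / 2 - (a₁ + a₂ + β)|) ∧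
      (|a₁ - a₂ - β| ≤ b₁ - b₂ ∧ b₁ - b₂ ≤ a₁ - a₂ + β)) := by
  obtain ⟨hβ0, hβ4⟩ := hβ
  have hdiff : b₁ - b₂ ∈ Icc 0 (π / 2) := ⟨by linarith, by linarith⟩
  have hsum : b₁ + b₂ ∈ Icc 0 (π / 2) := ⟨by linarith, by linarith⟩
  rw [cos_two_mul_le_cos_two_mul_iff_le_pi_div_two_sub_abs ⟨by linarith, by linarith⟩ hdiff,
    cos_two_mul_le_cos_two_mul_iff_abs_le (abs_le.2 ⟨by linarith, by linarith⟩) hdiff,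
    cos_two_mul_le_cos_two_mul_iff_le_pi_div_two_sub_abs ⟨by linarith, by linarith⟩ hsum,
    cos_two_mul_le_cos_two_mul_iff_abs_le (abs_le.2 ⟨by linarith, by linarith⟩) hsum]
  simp only [le_sub_comm (a := b₁ - b₂), le_sub_comm (a := b₁ + b₂), abs_le]
  constructor
  · rintro ⟨⟨⟨h₁, h₂⟩, h₃, h₄⟩, ⟨h₅, h₆⟩, h₇, h₈⟩
    exact ⟨⟨by linarith, by linarith, by linarith⟩, ⟨by linarith, by linarith⟩, by linarith⟩
  · rintro ⟨⟨h₁, h₂, h₃⟩, ⟨h₄, h₅⟩, h₆⟩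
    exact ⟨⟨⟨by linarith, by linarith⟩, by linarith, by linarith⟩, ⟨by linarith, by linarith⟩,
      by linarith, by linarith⟩
end

section
/- Let a = (a₁, a₂, a₃) with a₁ ≤ π/4, 0 ≤ a₃ ≤ a₂ ≤ a₁, and let b = (b₁, b₂, b₃) with b₁ ≥ π/4, 0 ≤ b₃ ≤ b₂ ≤ b₁ and b₁ + b₂ ≤ π/2. Define b' = (π/2 − b₁, b₂, b₃) and f(a,b) = ∏ⱼcos²(aⱼ−bⱼ) + ∏ⱼsin²(aⱼ−bⱼ). Then f(a, b') ≥ f(a, b). -/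
open Real

lemma cos_sq_mul_sub_sin_sq_mul (u v : ℝ) :
    Real.cos u ^ 2 * Real.cos v ^ 2 - Real.sin u ^ 2 * Real.sin v ^ 2
      = Real.cos (u + v) * Real.cos (u - v) := by
  rw [Real.cos_add, Real.cos_sub]; ring

/-- Reflection reduction for the approximation theorem: if `a₁ ≤ π/4` and `b₁ ≥ π/4`,
replacing `b` by its reflection `b' = (π/2 - b₁, b₂, b₃)` does not decrease the
fidelity `f(a,b) = ∏ cos²(aⱼ-bⱼ) + ∏ sin²(aⱼ-bⱼ)`. -/
theorem reflection_increases_fidelity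
    (a₁ a₂ a₃ b₁ b₂ b₃ : ℝ)
    (ha₁ : a₁ ≤ π / 4) (ha : 0 ≤ a₃ ∧ a₃ ≤ a₂ ∧ a₂ ≤ a₁)
    (hb₁ : b₁ ≥ π / 4) (hb : 0 ≤ b₃ ∧ b₃ ≤ b₂ ∧ b₂ ≤ b₁) (hbsum : b₁ + b₂ ≤ π / 2) :
    Real.cos (a₁ - (π / 2 - b₁)) ^ 2 * Real.cos (a₂ - b₂) ^ 2 * Real.cos (a₃ - b₃) ^ 2 +
        Real.sin (a₁ - (π / 2 - b₁)) ^ 2 * Real.sin (a₂ - b₂) ^ 2 *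
          Real.sin (a₃ - b₃) ^ 2 ≥
      Real.cos (a₁ - b₁) ^ 2 * Real.cos (a₂ - b₂) ^ 2 * Real.cos (a₃ - b₃) ^ 2 +
        Real.sin (a₁ - b₁) ^ 2 * Real.sin (a₂ - b₂) ^ 2 * Real.sin (a₃ - b₃) ^ 2 := by
  obtain ⟨ha3, ha32, ha21⟩ := ha
  obtain ⟨hb3, hb32, hb21⟩ := hb
  have hpi : (0:ℝ) < π := Real.pi_pos
  have ha1nn : 0 ≤ a₁ := le_trans (le_trans ha3 ha32) ha21
  have hb1le : b₁ ≤ π / 2 := by linarith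
  -- c - s = cos(u+v) cos(u-v) ≥ 0
  have hE : Real.sin (a₂ - b₂) ^ 2 * Real.sin (a₃ - b₃) ^ 2
      ≤ Real.cos (a₂ - b₂) ^ 2 * Real.cos (a₃ - b₃) ^ 2 := by
    have h1 : 0 ≤ Real.cos ((a₂ - b₂) + (a₃ - b₃)) := by
      apply Real.cos_nonneg_of_mem_Icc
      constructor <;> [nlinarith; nlinarith]
    have h2 : 0 ≤ Real.cos ((a₂ - b₂) - (a₃ - b₃)) := by
      apply Real.cos_nonneg_of_mem_Icc
      constructor <;> [nlinarith; nlinarith]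
    have key := cos_sq_mul_sub_sin_sq_mul (a₂ - b₂) (a₃ - b₃)
    nlinarith [mul_nonneg h1 h2]
  -- cos²x' ≥ cos²x
  have hD : Real.cos (a₁ - b₁) ^ 2 ≤ Real.cos (a₁ - (π / 2 - b₁)) ^ 2 := by
    have key : Real.cos (a₁ - (π / 2 - b₁)) ^ 2 - Real.cos (a₁ - b₁) ^ 2
        = - (Real.sin (2 * a₁ - π / 2) * Real.sin (2 * b₁ - π / 2)) := by
      have e1 : Real.cos (a₁ - (π / 2 - b₁)) ^ 2 = 1/2 + Real.cos (2 * (a₁ - (π/2 - b₁))) / 2 :=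
        Real.cos_sq _
      have e2 : Real.cos (a₁ - b₁) ^ 2 = 1/2 + Real.cos (2 * (a₁ - b₁)) / 2 :=
        Real.cos_sq _
      rw [e1, e2]
      have e3 : Real.cos (2 * (a₁ - (π/2 - b₁))) - Real.cos (2 * (a₁ - b₁))
          = -2 * Real.sin ((2 * (a₁ - (π/2 - b₁)) + 2 * (a₁ - b₁)) / 2)
              * Real.sin ((2 * (a₁ - (π/2 - b₁)) - 2 * (a₁ - b₁)) / 2) :=
        Real.cos_sub_cos _ _
      have e4 : (2 * (a₁ - (π/2 - b₁)) + 2 * (a₁ - b₁)) / 2 = 2 * a₁ - π / 2 := by ring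
      have e5 : (2 * (a₁ - (π/2 - b₁)) - 2 * (a₁ - b₁)) / 2 = 2 * b₁ - π / 2 := by ring
      rw [e4, e5] at e3
      linarith
    have s1 : Real.sin (2 * a₁ - π / 2) ≤ 0 := by
      apply Real.sin_nonpos_of_nonpos_of_neg_pi_le <;> linarith
    have s2 : 0 ≤ Real.sin (2 * b₁ - π / 2) := by
      apply Real.sin_nonneg_of_nonneg_of_le_pi <;> linarith
    nlinarith [mul_nonneg (neg_nonneg.mpr s1) s2]
  -- combine: diff = (cos²x' - cos²x) * (c - s)
  have hsx : Real.sin (a₁ - (π / 2 - b₁)) ^ 2 = 1 - Real.cos (a₁ - (π / 2 - b₁)) ^ 2 := by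
    have := Real.sin_sq_add_cos_sq (a₁ - (π / 2 - b₁)); linarith
  have hsx' : Real.sin (a₁ - b₁) ^ 2 = 1 - Real.cos (a₁ - b₁) ^ 2 := by
    have := Real.sin_sq_add_cos_sq (a₁ - b₁); linarith
  rw [hsx, hsx']
  have prod := mul_nonneg (sub_nonneg.mpr hD) (sub_nonneg.mpr hE)
  have expand : (Real.cos (a₁ - (π / 2 - b₁)) ^ 2 * Real.cos (a₂ - b₂) ^ 2 * Real.cos (a₃ - b₃) ^ 2 +
        (1 - Real.cos (a₁ - (π / 2 - b₁)) ^ 2) * Real.sin (a₂ - b₂) ^ 2 * Real.sin (a₃ - b₃) ^ 2)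
      - (Real.cos (a₁ - b₁) ^ 2 * Real.cos (a₂ - b₂) ^ 2 * Real.cos (a₃ - b₃) ^ 2 +
        (1 - Real.cos (a₁ - b₁) ^ 2) * Real.sin (a₂ - b₂) ^ 2 * Real.sin (a₃ - b₃) ^ 2)
      = (Real.cos (a₁ - (π / 2 - b₁)) ^ 2 - Real.cos (a₁ - b₁) ^ 2)
        * (Real.cos (a₂ - b₂) ^ 2 * Real.cos (a₃ - b₃) ^ 2
           - Real.sin (a₂ - b₂) ^ 2 * Real.sin (a₃ - b₃) ^ 2) := by ring
  linarith
end
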